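/- arXiv:1004.1183 — 2 statements merged into one kernel-verified Lean document; each statement's English description precedes it below -/
import Mathlib

section
/- Let G be a trivalent graph, e a non-cycle internal edge with G^e = G₁ ⊔ G₂, and ω ∈ τ(G). If the component ρ₁^e(ω) ∈ τ(G₁) decomposes as a sum σ₁ + σ₂ of elements of τ(G₁) of positive degrees d₁, d₂, and G₂ is a tree, then ω decomposes as a sum of elements of τ(G) of degrees d₁ and d₂. -/
/-!
Common setup: finite (multi)graphs with ordered boundary maps `fst`, `snd`
(the boundary is morally unordered; loops and multiple edges are allowed).
-/

structure TGraph where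
  V : Type
  E : Type
  [fintV : Fintype V]
  [fintE : Fintype E]
  [decV : DecidableEq V]
  [decE : DecidableEq E]
  fst : E → V
  snd : E → V

namespace TGraph

variable (G : TGraph)

instance : Fintype G.V := G.fintV
instance : Fintype G.E := G.fintE
instance : DecidableEq G.V := G.decV
instance : DecidableEq G.E := G.decE

/-- Number of endpoints of `e` equal to `v` (a loop counts twice). -/
def mult (v : G.V) (e : G.E) : ℕ :=
  (if G.fst e = v then 1 else 0) + (if G.snd e = v then 1 else 0)

/-- Valency of a vertex (a loop contributes two). -/
def degree (v : G.V) : ℕ := ∑ e, G.mult v e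

/-- A leaf is a vertex incident to exactly one edge (valency one). -/
def IsLeaf (v : G.V) : Prop := G.degree v = 1

instance : DecidablePred G.IsLeaf := fun v => inferInstanceAs (Decidable (G.degree v = 1))

/-- A graph is trivalent when every non-leaf vertex has valency three. -/
def Trivalent : Prop := ∀ v, G.degree v = 1 ∨ G.degree v = 3

/-- The number of leaves. -/
def numLeaves : ℕ := Fintype.card {v : G.V // G.IsLeaf v}

/-- The number of inner (non-leaf) vertices. -/
def numInner : ℕ := Fintype.card {v : G.V // ¬ G.IsLeaf v}

/-- The number of connected components. -/
noncomputable def components : ℕ :=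
  Nat.card (Quot fun v w : G.V =>
    ∃ e, (G.fst e = v ∧ G.snd e = w) ∨ (G.fst e = w ∧ G.snd e = v))

/-- The first Betti number, computed via the Euler characteristic:
`g = |E| - |V| + c`. -/
noncomputable def betti : ℤ := (Fintype.card G.E : ℤ) - Fintype.card G.V + G.components

/-- The value of the vertex functional `v = Σ_{e ∋ v} e*` on an edge labeling. -/
def vsum (v : G.V) (u : G.E → ℤ) : ℤ := ∑ e, (G.mult v e : ℤ) * u e

/-- Membership in the graded lattice `M^gr = ℤ ⊕ M`: the edge labeling has even
sum at every inner vertex. -/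
def InMgr (ω : ℤ × (G.E → ℤ)) : Prop :=
  ∀ v, ¬ G.IsLeaf v → Even (G.vsum v ω.2)

/-- Membership in the graded cone `τ(G) ⊂ ℤ ⊕ M`: nonnegative degree and edge
values, parity at inner vertices, the triangle inequalities at every inner
vertex (encoded as: twice each incident value is at most the local sum), and
the degree bound `deg ω ≥ deg_v ω` at every inner vertex. -/
def InCone (ω : ℤ × (G.E → ℤ)) : Prop :=
  0 ≤ ω.1 ∧ (∀ e, 0 ≤ ω.2 e) ∧
  ∀ v, ¬ G.IsLeaf v →
    Even (G.vsum v ω.2) ∧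
    (∀ e, G.mult v e ≠ 0 → 2 * ω.2 e ≤ G.vsum v ω.2) ∧
    G.vsum v ω.2 ≤ 2 * ω.1

/-- A network: a 0-1 edge labeling with even local sum at every inner vertex.
For trivalent graphs this is exactly a disjoint union of leaf-to-leaf
edge-paths and cycles. -/
def IsNetwork (u : G.E → ℤ) : Prop :=
  (∀ e, u e = 0 ∨ u e = 1) ∧ ∀ v, ¬ G.IsLeaf v → Even (G.vsum v u)

end TGraph

namespace TGraph

/-- Cone conditions imposed only at the inner vertices satisfying `P`: this is
membership in the cone of the subgraph spanned by the `P`-side. -/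
def InConeOn (G : TGraph) (P : G.V → Prop) (ω : ℤ × (G.E → ℤ)) : Prop :=
  0 ≤ ω.1 ∧ (∀ e, 0 ≤ ω.2 e) ∧
  ∀ v, P v → ¬ G.IsLeaf v →
    Even (G.vsum v ω.2) ∧
    (∀ e, G.mult v e ≠ 0 → 2 * ω.2 e ≤ G.vsum v ω.2) ∧
    G.vsum v ω.2 ≤ 2 * ω.1

end TGraph

namespace TGDecompAux

/-- `n`-step walks for a relation. -/
def steps {α : Type*} (r : α → α → Prop) : ℕ → α → α → Prop
  | 0, a, b => a = b
  | n+1, a, b => ∃ c, r a c ∧ steps r n c b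

theorem steps_trans {α : Type*} {r : α → α → Prop} :
    ∀ {m n : ℕ} {a b c : α}, steps r m a b → steps r n b c → steps r (m + n) a c := by
  intro m
  induction m with
  | zero => intro n a b c h1 h2; cases h1; simpa using h2
  | succ k ih =>
    intro n a b c h1 h2
    obtain ⟨d, hd, hst⟩ := h1
    have he : k + 1 + n = (k + n) + 1 := by omega
    rw [he]
    exact ⟨d, hd, ih hst h2⟩

theorem steps_symm {α : Type*} {r : α → α → Prop} (hr : ∀ a b, r a b → r b a) :
    ∀ {n : ℕ} {a b : α}, steps r n a b → steps r n b a := by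
  intro n
  induction n with
  | zero => intro a b h; exact h.symm
  | succ k ih =>
    intro a b h
    obtain ⟨c, hc, hst⟩ := h
    exact steps_trans (ih hst) (show steps r 1 c a from ⟨a, hr _ _ hc, rfl⟩)

theorem steps_map {α β : Type*} {r : α → α → Prop} {r' : β → β → Prop} (g : α → β)
    (h : ∀ a b, r a b → r' (g a) (g b)) :
    ∀ {n : ℕ} {a b : α}, steps r n a b → steps r' n (g a) (g b) := by
  intro n
  induction n with
  | zero => intro a b hab; cases hab; rfl
  | succ k ih =>
    intro a b hab
    obtain ⟨c, hc, hst⟩ := hab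
    exact ⟨g c, h _ _ hc, ih hst⟩

theorem steps_last {α : Type*} {r : α → α → Prop} :
    ∀ (n : ℕ) (a b : α), steps r (n+1) a b → ∃ c, r c b := by
  intro n
  induction n with
  | zero =>
    intro a b h
    obtain ⟨c, hc, hst⟩ := h
    cases hst
    exact ⟨a, hc⟩
  | succ k ih =>
    intro a b h
    obtain ⟨c, _, hst⟩ := h
    exact ih c b hst

theorem eqvGen_steps {α : Type*} {r : α → α → Prop} (hr : ∀ a b, r a b → r b a)
    {a b : α} (h : Relation.EqvGen r a b) : ∃ n, steps r n a b := by
  induction h with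
  | rel x y hxy => exact ⟨1, y, hxy, rfl⟩
  | refl x => exact ⟨0, rfl⟩
  | symm x y _ ih => obtain ⟨n, hn⟩ := ih; exact ⟨n, steps_symm hr hn⟩
  | trans x y z _ _ ih1 ih2 =>
    obtain ⟨m, hm⟩ := ih1; obtain ⟨n, hn⟩ := ih2; exact ⟨m + n, steps_trans hm hn⟩

theorem local_split (a β γ d₁ d₂ a₁ a₂ : ℤ)
    (ha₁ : 0 ≤ a₁) (ha₁' : a₁ ≤ d₁) (ha₂ : 0 ≤ a₂) (ha₂' : a₂ ≤ d₂)
    (hsum : a₁ + a₂ = a) (hβ : 0 ≤ β) (hγ : 0 ≤ γ)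
    (t1 : a ≤ β + γ) (t2 : β ≤ a + γ) (t3 : γ ≤ a + β)
    (hpar : 2 ∣ (a + β + γ)) (hbd : a + β + γ ≤ 2 * (d₁ + d₂)) :
    ∃ b₁ c₁ : ℤ, 0 ≤ b₁ ∧ b₁ ≤ β ∧ 0 ≤ c₁ ∧ c₁ ≤ γ ∧
      b₁ ≤ d₁ ∧ c₁ ≤ d₁ ∧ β - b₁ ≤ d₂ ∧ γ - c₁ ≤ d₂ ∧
      2 ∣ (a₁ + b₁ + c₁) ∧
      a₁ ≤ b₁ + c₁ ∧ b₁ ≤ a₁ + c₁ ∧ c₁ ≤ a₁ + b₁ ∧ a₁ + b₁ + c₁ ≤ 2 * d₁ ∧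
      2 ∣ (a₂ + (β - b₁) + (γ - c₁)) ∧
      a₂ ≤ (β - b₁) + (γ - c₁) ∧ (β - b₁) ≤ a₂ + (γ - c₁) ∧ (γ - c₁) ≤ a₂ + (β - b₁) ∧
      a₂ + (β - b₁) + (γ - c₁) ≤ 2 * d₂ := by
  obtain ⟨s, hs⟩ := hpar
  refine ⟨min (s - a) (d₁ - a₁) + (a₁ - min (s - β) a₁), min (s - a) (d₁ - a₁) + min (s - β) a₁,
    ?_, ?_, ?_, ?_, ?_, ?_, ?_, ?_, ?_, ?_, ?_, ?_, ?_, ?_, ?_, ?_, ?_, ?_⟩ <;> omega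

end TGDecompAux

/-- Combine a labeling of the pendant-tree edges with the old labeling elsewhere. -/
def TGraph.cmb (G : TGraph) (e₀ : G.E) (side : G.V → Bool) (A : ℤ) (σ : G.E → ℤ)
    (f : {e : G.E // e ≠ e₀ ∧ side (G.fst e) = false} → ℤ) (e : G.E) : ℤ :=
  if h : e ≠ e₀ ∧ side (G.fst e) = false then f ⟨e, h⟩ else if e = e₀ then A else σ e

theorem TGraph.cmb_mem (G : TGraph) (e₀ : G.E) (side : G.V → Bool) (A : ℤ) (σ : G.E → ℤ)
    (f : {e : G.E // e ≠ e₀ ∧ side (G.fst e) = false} → ℤ) (e : G.E)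
    (h : e ≠ e₀ ∧ side (G.fst e) = false) : G.cmb e₀ side A σ f e = f ⟨e, h⟩ :=
  dif_pos h

theorem TGraph.cmb_e₀ (G : TGraph) (e₀ : G.E) (side : G.V → Bool) (A : ℤ) (σ : G.E → ℤ)
    (f : {e : G.E // e ≠ e₀ ∧ side (G.fst e) = false} → ℤ) :
    G.cmb e₀ side A σ f e₀ = A := by
  unfold TGraph.cmb
  rw [dif_neg (by simp), if_pos rfl]

/-- Decomposition propagates to pendant trees.  `e₀` is a bridge
(non-cycle edge) separating the `true` side `G₁` from the `false` side `G₂`;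
the `false` side is a tree (Euler count and connectedness hypotheses).  If the
component `ρ₁(ω)` decomposes in `τ(G₁)` as a sum of elements of positive
degrees `d₁, d₂`, then `ω` decomposes in `τ(G)` into elements of degrees
`d₁` and `d₂`. -/
theorem decomposition_propagates (G : TGraph) (hG : G.Trivalent) (e₀ : G.E)
    (side : G.V → Bool)
    (hsep : ∀ e, e ≠ e₀ → side (G.fst e) = side (G.snd e))
    (h1 : side (G.fst e₀) = true) (h2 : side (G.snd e₀) = false)
    (htreeV : Fintype.card {v : G.V // side v = false} =
      Fintype.card {e : G.E // e ≠ e₀ ∧ side (G.fst e) = false} + 1)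
    (htreeC : Nat.card (Quot fun v w : {v : G.V // side v = false} =>
      ∃ e, e ≠ e₀ ∧ ((G.fst e = v.1 ∧ G.snd e = w.1) ∨ (G.fst e = w.1 ∧ G.snd e = v.1))) = 1)
    (ω : ℤ × (G.E → ℤ)) (hω : G.InCone ω)
    (σ₁ σ₂ : ℤ × (G.E → ℤ)) (d₁ d₂ : ℤ) (hd₁ : 0 < d₁) (hd₂ : 0 < d₂)
    (hσ₁deg : σ₁.1 = d₁) (hσ₂deg : σ₂.1 = d₂)
    (hdegsum : σ₁.1 + σ₂.1 = ω.1)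
    (hvals : ∀ e, (side (G.fst e) = true ∨ e = e₀) → σ₁.2 e + σ₂.2 e = ω.2 e)
    (hc₁ : G.InConeOn (fun v => side v = true) σ₁)
    (hc₂ : G.InConeOn (fun v => side v = true) σ₂) :
    ∃ ω₁ ω₂ : ℤ × (G.E → ℤ),
      G.InCone ω₁ ∧ G.InCone ω₂ ∧ ω = ω₁ + ω₂ ∧ ω₁.1 = d₁ ∧ ω₂.1 = d₂ := by
  classical
  haveI : Nonempty G.E := ⟨e₀⟩
  haveI : Nonempty G.V := ⟨G.snd e₀⟩
  obtain ⟨hω0, hωval, hωvert⟩ := hω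
  obtain ⟨-, hσ₁val, hσ₁vert⟩ := hc₁
  obtain ⟨-, hσ₂val, hσ₂vert⟩ := hc₂
  have hω1 : ω.1 = d₁ + d₂ := by rw [← hdegsum, hσ₁deg, hσ₂deg]
  have heven : ∀ m : ℤ, Even m ↔ 2 ∣ m :=
    fun m => ⟨fun ⟨k, hk⟩ => ⟨k, by omega⟩, fun ⟨k, hk⟩ => ⟨k, by omega⟩⟩
  have hmult_inc : ∀ (v : G.V) (e : G.E), G.mult v e ≠ 0 ↔ (G.fst e = v ∨ G.snd e = v) := by
    intro v e
    unfold TGraph.mult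
    by_cases hf : G.fst e = v <;> by_cases hs : G.snd e = v <;> simp [hf, hs]
  have hdeg2 : ∀ (v : G.V) (e e' : G.E), e ≠ e' → (G.fst e = v ∨ G.snd e = v) →
      (G.fst e' = v ∨ G.snd e' = v) → ¬ G.IsLeaf v := by
    intro v e e' hne he he' hleaf
    have h1e : G.mult v e ≠ 0 := (hmult_inc v e).mpr he
    have h2e : G.mult v e' ≠ 0 := (hmult_inc v e').mpr he'
    have hsum2 : G.mult v e + G.mult v e' ≤ G.degree v := by
      unfold TGraph.degree
      rw [← Finset.sum_pair hne]
      exact Finset.sum_le_sum_of_subset (Finset.subset_univ _)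
    have hdv : G.degree v = 1 := hleaf
    omega
  have hveq : ∀ (v : G.V) (u u' : G.E → ℤ), (∀ e, G.mult v e ≠ 0 → u e = u' e) →
      G.vsum v u = G.vsum v u' := by
    intro v u u' h
    unfold TGraph.vsum
    refine Finset.sum_congr rfl fun e _ => ?_
    by_cases hm : G.mult v e = 0
    · simp [hm]
    · rw [h e hm]
  have hcondeq : ∀ (v : G.V) (u u' : G.E → ℤ) (D : ℤ), (∀ e, G.mult v e ≠ 0 → u e = u' e) →
      (2 ∣ G.vsum v u ∧ (∀ e, G.mult v e ≠ 0 → 2 * u e ≤ G.vsum v u) ∧ G.vsum v u ≤ 2 * D) →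
      (2 ∣ G.vsum v u' ∧ (∀ e, G.mult v e ≠ 0 → 2 * u' e ≤ G.vsum v u') ∧ G.vsum v u' ≤ 2 * D) := by
    intro v u u' D he h
    have hv' : G.vsum v u' = G.vsum v u := (hveq v u u' he).symm
    refine ⟨by rw [hv']; exact h.1, fun e hm => ?_, by rw [hv']; exact h.2.2⟩
    rw [hv', ← he e hm]
    exact h.2.1 e hm
  have hconn : ∀ v : G.V, side v = false → ∃ n,
      TGDecompAux.steps (fun x y : G.V => ∃ e, e ≠ e₀ ∧
        ((G.fst e = x ∧ G.snd e = y) ∨ (G.fst e = y ∧ G.snd e = x))) n v (G.snd e₀) := by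
    intro v hv
    have hsub : Subsingleton (Quot fun v w : {v : G.V // side v = false} =>
        ∃ e, e ≠ e₀ ∧ ((G.fst e = v.1 ∧ G.snd e = w.1) ∨ (G.fst e = w.1 ∧ G.snd e = v.1))) :=
      (Nat.card_eq_one_iff_unique.mp htreeC).1
    have heq : Quot.mk (fun v w : {v : G.V // side v = false} =>
        ∃ e, e ≠ e₀ ∧ ((G.fst e = v.1 ∧ G.snd e = w.1) ∨ (G.fst e = w.1 ∧ G.snd e = v.1)))
        (⟨v, hv⟩ : {v : G.V // side v = false}) = Quot.mk _ ⟨G.snd e₀, h2⟩ :=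
      Subsingleton.elim _ _
    have heqv := Quot.eq.mp heq
    obtain ⟨n, hn⟩ := TGDecompAux.eqvGen_steps (fun a b hab => by
      obtain ⟨e, he1, he2⟩ := hab
      exact ⟨e, he1, he2.symm⟩) heqv
    exact ⟨n, TGDecompAux.steps_map (r' := fun x y : G.V => ∃ e, e ≠ e₀ ∧
      ((G.fst e = x ∧ G.snd e = y) ∨ (G.fst e = y ∧ G.snd e = x)))
      Subtype.val (fun a b hab => hab) hn⟩
  by_cases hWleaf : G.IsLeaf (G.snd e₀)
  · -- the pendant side is a single leaf: σ₁, σ₂ already work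
    have honlyW : ∀ v : G.V, side v = false → v = G.snd e₀ := by
      intro v hv
      obtain ⟨n, hn⟩ := hconn v hv
      cases n with
      | zero => exact hn
      | succ k =>
        obtain ⟨c, hrc⟩ := TGDecompAux.steps_last _ _ _ hn
        obtain ⟨e, he1, he2⟩ := hrc
        exact absurd hWleaf (hdeg2 (G.snd e₀) e e₀ he1 (by tauto) (Or.inr rfl))
    have hnotfalse : ∀ e : G.E, e ≠ e₀ → side (G.fst e) = true := by
      intro e he
      by_contra h
      have hf : side (G.fst e) = false := by revert h; cases side (G.fst e) <;> simp
      exact absurd hWleaf (hdeg2 (G.snd e₀) e e₀ he (Or.inl (honlyW _ hf)) (Or.inr rfl))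
    refine ⟨σ₁, σ₂, ⟨by rw [hσ₁deg]; exact hd₁.le, hσ₁val, ?_⟩,
      ⟨by rw [hσ₂deg]; exact hd₂.le, hσ₂val, ?_⟩, ?_, hσ₁deg, hσ₂deg⟩
    · intro v hleaf
      by_cases hv : side v = true
      · exact hσ₁vert v hv hleaf
      · have hv' : side v = false := by revert hv; cases side v <;> simp
        rw [honlyW v hv'] at hleaf
        exact absurd hWleaf hleaf
    · intro v hleaf
      by_cases hv : side v = true
      · exact hσ₂vert v hv hleaf
      · have hv' : side v = false := by revert hv; cases side v <;> simp
        rw [honlyW v hv'] at hleaf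
        exact absurd hWleaf hleaf
    · refine Prod.ext_iff.mpr ⟨?_, ?_⟩
      · rw [Prod.fst_add]
        exact hdegsum.symm
      · rw [Prod.snd_add]
        funext e
        simp only [Pi.add_apply]
        by_cases he : e = e₀
        · rw [he]; exact (hvals e₀ (Or.inr rfl)).symm
        · exact (hvals e (Or.inl (hnotfalse e he))).symm
  -- main case: the pendant side has an inner root
  · have hdepE : ∀ v : G.V, ∃ n : ℕ, side v = false →
        (TGDecompAux.steps (fun x y : G.V => ∃ e, e ≠ e₀ ∧
          ((G.fst e = x ∧ G.snd e = y) ∨ (G.fst e = y ∧ G.snd e = x))) n v (G.snd e₀) ∧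
        ∀ m, TGDecompAux.steps (fun x y : G.V => ∃ e, e ≠ e₀ ∧
          ((G.fst e = x ∧ G.snd e = y) ∨ (G.fst e = y ∧ G.snd e = x))) m v (G.snd e₀) → n ≤ m) := by
      intro v
      by_cases hv : side v = false
      · exact ⟨Nat.find (hconn v hv), fun _ =>
          ⟨Nat.find_spec (hconn v hv), fun m hm => Nat.find_le hm⟩⟩
      · exact ⟨0, fun h => absurd h hv⟩
    choose dep hdepspec using hdepE
    have hdepW : dep (G.snd e₀) = 0 := Nat.le_zero.mp ((hdepspec _ h2).2 0 rfl)
    have hdep0 : ∀ v, side v = false → dep v = 0 → v = G.snd e₀ := by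
      intro v hv h0
      have h := (hdepspec v hv).1
      rw [h0] at h
      exact h
    have hparent : ∀ v, side v = false → v ≠ G.snd e₀ → ∃ e, e ≠ e₀ ∧ side (G.fst e) = false ∧
        ((G.fst e = v ∧ dep (G.snd e) + 1 = dep v) ∨ (G.snd e = v ∧ dep (G.fst e) + 1 = dep v)) := by
      intro v hv hvW
      have h0 : dep v ≠ 0 := fun h => hvW (hdep0 v hv h)
      obtain ⟨k, hk⟩ : ∃ k, dep v = k + 1 := ⟨dep v - 1, by omega⟩
      have hst := (hdepspec v hv).1
      rw [hk] at hst
      obtain ⟨u, hru, hst'⟩ := hst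
      obtain ⟨e, he1, he2⟩ := hru
      have hu : side u = false := by
        rcases he2 with ⟨hf, hs⟩ | ⟨hf, hs⟩
        · rw [← hs, ← hsep e he1, hf]; exact hv
        · rw [← hf, hsep e he1, hs]; exact hv
      have hle : dep u ≤ k := (hdepspec u hu).2 k hst'
      have hge : dep v ≤ dep u + 1 :=
        (hdepspec v hv).2 (dep u + 1) ⟨u, ⟨e, he1, he2⟩, (hdepspec u hu).1⟩
      have hdu : dep u = k := by omega
      have hfe : side (G.fst e) = false := by
        rcases he2 with ⟨hf, _⟩ | ⟨hf, _⟩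
        · rw [hf]; exact hv
        · rw [hf]; exact hu
      refine ⟨e, he1, hfe, ?_⟩
      rcases he2 with ⟨hf, hs⟩ | ⟨hf, hs⟩
      · exact Or.inl ⟨hf, by rw [hs, hdu, hk]⟩
      · exact Or.inr ⟨hs, by rw [hf, hdu, hk]⟩
    choose! parE hparE using hparent
    have hpar_inc : ∀ v, side v = false → v ≠ G.snd e₀ →
        (G.fst (parE v) = v ∨ G.snd (parE v) = v) := by
      intro v hv hvW
      rcases (hparE v hv hvW).2.2 with ⟨h, _⟩ | ⟨h, _⟩
      · exact Or.inl h
      · exact Or.inr h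
    have hparinj : ∀ v v', side v = false → v ≠ G.snd e₀ → side v' = false → v' ≠ G.snd e₀ →
        parE v = parE v' → v = v' := by
      intro v v' hv hvW hv' hv'W he
      obtain ⟨-, -, hd⟩ := hparE v hv hvW
      obtain ⟨-, -, hd'⟩ := hparE v' hv' hv'W
      rw [he] at hd
      rcases hd with ⟨ha, hb⟩ | ⟨ha, hb⟩ <;> rcases hd' with ⟨ha', hb'⟩ | ⟨ha', hb'⟩
      · exact ha.symm.trans ha'
      · rw [ha'] at hb; rw [ha] at hb'; omega
      · rw [ha'] at hb; rw [ha] at hb'; omega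
      · exact ha.symm.trans ha'
    have hcard : Fintype.card {v : G.V // side v = false ∧ v ≠ G.snd e₀} =
        Fintype.card {e : G.E // e ≠ e₀ ∧ side (G.fst e) = false} := by
      have e1 : {v : G.V // side v = false ∧ v ≠ G.snd e₀} ≃
          {x : {v : G.V // side v = false} // ¬ (x = ⟨G.snd e₀, h2⟩)} :=
        (Equiv.subtypeSubtypeEquivSubtypeInter (fun v => side v = false)
          (· ≠ G.snd e₀)).symm.trans
          (Equiv.subtypeEquivRight (fun x => by simp [Subtype.ext_iff]))
      rw [Fintype.card_congr e1, Fintype.card_subtype_compl, Fintype.card_subtype_eq, htreeV]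
      omega
    have hsurj : ∀ e : G.E, (e ≠ e₀ ∧ side (G.fst e) = false) →
        ∃ v, (side v = false ∧ v ≠ G.snd e₀) ∧ parE v = e := by
      have hinj : Function.Injective (fun x : {v : G.V // side v = false ∧ v ≠ G.snd e₀} =>
          (⟨parE x.1, (hparE x.1 x.2.1 x.2.2).1, (hparE x.1 x.2.1 x.2.2).2.1⟩ :
            {e : G.E // e ≠ e₀ ∧ side (G.fst e) = false})) := by
        intro x y h
        have h' : parE x.1 = parE y.1 := congrArg Subtype.val h
        exact Subtype.ext (hparinj x.1 y.1 x.2.1 x.2.2 y.2.1 y.2.2 h')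
      have hbij := (Fintype.bijective_iff_injective_and_card _).mpr ⟨hinj, hcard⟩
      intro e he
      obtain ⟨x, hx⟩ := hbij.2 ⟨e, he⟩
      exact ⟨x.1, x.2, congrArg Subtype.val hx⟩
    choose! ownr hownr using hsurj
    have hospec : ∀ e : G.E, e ≠ e₀ → side (G.fst e) = false →
        ((G.fst e = ownr e ∧ dep (G.snd e) + 1 = dep (ownr e)) ∨
         (G.snd e = ownr e ∧ dep (G.fst e) + 1 = dep (ownr e))) := by
      intro e he1 he2
      have h := (hparE (ownr e) ((hownr e ⟨he1, he2⟩).1.1) ((hownr e ⟨he1, he2⟩).1.2)).2.2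
      rw [(hownr e ⟨he1, he2⟩).2] at h
      exact h
    have hnoloop : ∀ e : G.E, e ≠ e₀ → side (G.fst e) = false → G.fst e ≠ G.snd e := by
      intro e he1 he2 hloop
      rcases hospec e he1 he2 with ⟨hf, hd⟩ | ⟨hf, hd⟩
      · rw [← hloop, hf] at hd; omega
      · rw [hloop, hf] at hd; omega
    obtain ⟨upf, hupf⟩ : ∃ u : G.E → G.V, ∀ e : G.E, e ≠ e₀ → side (G.fst e) = false →
        ((G.fst e = ownr e ∧ u e = G.snd e) ∨
         (G.fst e ≠ ownr e ∧ G.snd e = ownr e ∧ u e = G.fst e)) := by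
      refine ⟨fun e => if G.fst e = ownr e then G.snd e else G.fst e, fun e he1 he2 => ?_⟩
      by_cases h : G.fst e = ownr e
      · exact Or.inl ⟨h, if_pos h⟩
      · refine Or.inr ⟨h, ?_, if_neg h⟩
        rcases hospec e he1 he2 with ⟨hf, _⟩ | ⟨hf, _⟩
        · exact absurd hf h
        · exact hf
    have hup_end : ∀ e, e ≠ e₀ → side (G.fst e) = false →
        (G.fst e = upf e ∨ G.snd e = upf e) := by
      intro e he1 he2
      rcases hupf e he1 he2 with ⟨_, hu⟩ | ⟨_, _, hu⟩
      · exact Or.inr hu.symm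
      · exact Or.inl hu.symm
    have hup_dep : ∀ e, e ≠ e₀ → side (G.fst e) = false → dep (upf e) + 1 = dep (ownr e) := by
      intro e he1 he2
      rcases hupf e he1 he2 with ⟨hf, hu⟩ | ⟨hfne, hs, hu⟩
      · rcases hospec e he1 he2 with ⟨_, hd⟩ | ⟨hs', hd⟩
        · rw [hu]; exact hd
        · exact absurd (hf.trans hs'.symm) (hnoloop e he1 he2)
      · rcases hospec e he1 he2 with ⟨hf', _⟩ | ⟨_, hd⟩
        · exact absurd hf' hfne
        · rw [hu]; exact hd
    have hup_ne : ∀ e, e ≠ e₀ → side (G.fst e) = false → upf e ≠ ownr e := by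
      intro e he1 he2 h
      have hd := hup_dep e he1 he2
      rw [h] at hd
      omega
    have hchild : ∀ e, e ≠ e₀ → side (G.fst e) = false →
        ∀ v, (G.fst e = v ∨ G.snd e = v) → v ≠ ownr e → upf e = v := by
      intro e he1 he2 v hv hvo
      rcases hupf e he1 he2 with ⟨hf, hu⟩ | ⟨hfne, hs, hu⟩
      · rcases hv with h | h
        · exact absurd (h.symm.trans hf) hvo
        · exact hu.trans h
      · rcases hv with h | h
        · exact hu.trans h
        · exact absurd (h.symm.trans hs) hvo
    have hownr_par : ∀ v, side v = false → v ≠ G.snd e₀ → ownr (parE v) = v := by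
      intro v hv hvW
      have h1p := hparE v hv hvW
      have h2p := hownr (parE v) ⟨h1p.1, h1p.2.1⟩
      exact hparinj _ _ h2p.1.1 h2p.1.2 hv hvW h2p.2
    have hup_false : ∀ e, e ≠ e₀ → side (G.fst e) = false → side (upf e) = false := by
      intro e he1 he2
      rcases hup_end e he1 he2 with h | h
      · rw [← h]; exact he2
      · rw [← h, ← hsep e he1]; exact he2
    have hup_inner : ∀ e, e ≠ e₀ → side (G.fst e) = false → ¬ G.IsLeaf (upf e) := by
      intro e he1 he2
      by_cases h : upf e = G.snd e₀
      · exact hdeg2 (upf e) e e₀ he1 (hup_end e he1 he2) (Or.inr h.symm)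
      · have huf := hup_false e he1 he2
        have hne : e ≠ parE (upf e) := by
          intro hcontra
          have hoe := hownr_par (upf e) huf h
          rw [← hcontra] at hoe
          exact hup_ne e he1 he2 hoe.symm
        exact hdeg2 (upf e) e (parE (upf e)) hne (hup_end e he1 he2) (hpar_inc (upf e) huf h)
    have hEb : ∀ e, e ≠ e₀ → side (G.fst e) = false → ω.2 e ≤ d₁ + d₂ := by
      intro e he1 he2
      have h := hωvert (upf e) (hup_inner e he1 he2)
      have hm : G.mult (upf e) e ≠ 0 := (hmult_inc _ _).mpr (hup_end e he1 he2)
      have ha := h.2.1 e hm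
      have hb := h.2.2
      rw [hω1] at hb
      omega
    have he₀bd : ω.2 e₀ ≤ d₁ + d₂ := by
      have h := hωvert (G.snd e₀) hWleaf
      have hm : G.mult (G.snd e₀) e₀ ≠ 0 := (hmult_inc _ _).mpr (Or.inr rfl)
      have ha := h.2.1 e₀ hm
      have hb := h.2.2
      rw [hω1] at hb
      omega
    obtain ⟨A₁, A₂, hAsum, hA₁0, hA₁d, hA₂0, hA₂d, hAσ₁, hAσ₂⟩ :
        ∃ A₁ A₂ : ℤ, A₁ + A₂ = ω.2 e₀ ∧ 0 ≤ A₁ ∧ A₁ ≤ d₁ ∧ 0 ≤ A₂ ∧ A₂ ≤ d₂ ∧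
          (¬ G.IsLeaf (G.fst e₀) → A₁ = σ₁.2 e₀) ∧ (¬ G.IsLeaf (G.fst e₀) → A₂ = σ₂.2 e₀) := by
      by_cases hlf : G.IsLeaf (G.fst e₀)
      · have h0 := hωval e₀
        exact ⟨min (ω.2 e₀) d₁, ω.2 e₀ - min (ω.2 e₀) d₁, by omega, by omega, by omega,
          by omega, by omega, fun h => absurd hlf h, fun h => absurd hlf h⟩
      · have hb1 := hσ₁vert (G.fst e₀) h1 hlf
        have hb2 := hσ₂vert (G.fst e₀) h1 hlf
        have hm : G.mult (G.fst e₀) e₀ ≠ 0 := (hmult_inc _ _).mpr (Or.inl rfl)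
        have h1a := hb1.2.1 e₀ hm
        have h1b := hb1.2.2
        have h2a := hb2.2.1 e₀ hm
        have h2b := hb2.2.2
        rw [hσ₁deg] at h1b
        rw [hσ₂deg] at h2b
        exact ⟨σ₁.2 e₀, σ₂.2 e₀, hvals e₀ (Or.inr rfl), hσ₁val e₀, by omega, hσ₂val e₀,
          by omega, fun _ => rfl, fun _ => rfl⟩
    have hnoloopf : ∀ v, side v = false → ∀ e, G.fst e = v → G.snd e = v → False := by
      intro v hv e hf hs
      by_cases he : e = e₀
      · rw [he] at hf
        rw [hf] at h1
        exact Bool.noConfusion (h1.symm.trans hv)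
      · have hfe : side (G.fst e) = false := by rw [hf]; exact hv
        exact hnoloop e he hfe (hf.trans hs.symm)
    have hmult01 : ∀ v, side v = false → ∀ e, G.mult v e = 0 ∨ G.mult v e = 1 := by
      intro v hv e
      by_cases hf : G.fst e = v <;> by_cases hs : G.snd e = v
      · exact (hnoloopf v hv e hf hs).elim
      · right; unfold TGraph.mult; rw [if_pos hf, if_neg hs]
      · right; unfold TGraph.mult; rw [if_neg hf, if_pos hs]
      · left; unfold TGraph.mult; rw [if_neg hf, if_neg hs]
    have hinc_of_one : ∀ (v : G.V) (e : G.E), G.mult v e = 1 →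
        (G.fst e = v ∨ G.snd e = v) := by
      intro v e h
      exact (hmult_inc v e).mp (by omega)
    have hstruct : ∀ v, side v = false → ¬ G.IsLeaf v → ∀ p, (G.fst p = v ∨ G.snd p = v) →
        ∃ b c, b ≠ c ∧ p ≠ b ∧ p ≠ c ∧ G.mult v p = 1 ∧ G.mult v b = 1 ∧ G.mult v c = 1 ∧
          (∀ e, e ≠ p → e ≠ b → e ≠ c → G.mult v e = 0) ∧
          (G.fst b = v ∨ G.snd b = v) ∧ (G.fst c = v ∨ G.snd c = v) := by
      intro v hv hl p hp
      have hdeg3 : G.degree v = 3 := (hG v).resolve_left hl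
      have h01 := hmult01 v hv
      have hmp : G.mult v p = 1 := by
        have hne := (hmult_inc v p).mpr hp
        rcases h01 p with h | h
        · exact absurd h hne
        · exact h
      have hcard3 : (Finset.univ.filter fun e => G.mult v e = 1).card = 3 := by
        have hs : ∑ e, G.mult v e = 3 := hdeg3
        rw [Finset.card_filter, ← hs]
        refine Finset.sum_congr rfl fun e _ => ?_
        rcases h01 e with h | h <;> simp [h]
      obtain ⟨x, y, z, hxy, hxz, hyz, hset⟩ := Finset.card_eq_three.mp hcard3
      have hmem1 : ∀ e, G.mult v e = 1 → e = x ∨ e = y ∨ e = z := by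
        intro e he
        have hm : e ∈ Finset.univ.filter fun e => G.mult v e = 1 := by simp [he]
        rw [hset] at hm
        simpa using hm
      have hmemval : ∀ e, (e = x ∨ e = y ∨ e = z) → G.mult v e = 1 := by
        intro e he
        have hm : e ∈ Finset.univ.filter fun e => G.mult v e = 1 := by
          rw [hset]
          rcases he with rfl | rfl | rfl <;> simp
        simpa using hm
      have hzero : ∀ e, e ≠ x → e ≠ y → e ≠ z → G.mult v e = 0 := by
        intro e h1' h2' h3'
        rcases h01 e with h | h
        · exact h
        · rcases hmem1 e h with rfl | rfl | rfl
          · exact absurd rfl h1'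
          · exact absurd rfl h2'
          · exact absurd rfl h3'
      rcases hmem1 p hmp with rfl | rfl | rfl
      · have hmy := hmemval y (Or.inr (Or.inl rfl))
        have hmz := hmemval z (Or.inr (Or.inr rfl))
        exact ⟨y, z, hyz, hxy, hxz, hmp, hmy, hmz,
          fun e ha hb hc => hzero e ha hb hc,
          hinc_of_one v y hmy, hinc_of_one v z hmz⟩
      · have hmx := hmemval x (Or.inl rfl)
        have hmz := hmemval z (Or.inr (Or.inr rfl))
        exact ⟨x, z, hxz, Ne.symm hxy, hyz, hmp, hmx, hmz,
          fun e ha hb hc => hzero e hb ha hc,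
          hinc_of_one v x hmx, hinc_of_one v z hmz⟩
      · have hmx := hmemval x (Or.inl rfl)
        have hmy := hmemval y (Or.inr (Or.inl rfl))
        exact ⟨x, y, hxy, Ne.symm hxz, Ne.symm hyz, hmp, hmx, hmy,
          fun e ha hb hc => hzero e hb hc ha,
          hinc_of_one v x hmx, hinc_of_one v y hmy⟩
    have hvsum3 : ∀ (v : G.V) (p b c : G.E), p ≠ b → p ≠ c → b ≠ c →
        G.mult v p = 1 → G.mult v b = 1 → G.mult v c = 1 →
        (∀ e, e ≠ p → e ≠ b → e ≠ c → G.mult v e = 0) →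
        ∀ u : G.E → ℤ, G.vsum v u = u p + u b + u c := by
      intro v p b c hpb hpc hbc h1' h2' h3' h0 u
      have hz : ∀ x ∈ Finset.univ, x ∉ ({p, b, c} : Finset G.E) →
          (G.mult v x : ℤ) * u x = 0 := by
        intro x _ hx
        simp only [Finset.mem_insert, Finset.mem_singleton] at hx
        push_neg at hx
        rw [h0 x hx.1 hx.2.1 hx.2.2]
        simp
      have hss := Finset.sum_subset (Finset.subset_univ ({p, b, c} : Finset G.E)) hz
      unfold TGraph.vsum
      rw [← hss, Finset.sum_insert (by simp [hpb, hpc]), Finset.sum_insert (by simp [hbc]),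
        Finset.sum_singleton, h1', h2', h3']
      push_cast
      ring
    have hcmb_eq : ∀ (A : ℤ) (σv : G.E → ℤ)
        (F1 F2 : {e : G.E // e ≠ e₀ ∧ side (G.fst e) = false} → ℤ) (e : G.E),
        (∀ h : e ≠ e₀ ∧ side (G.fst e) = false, F1 ⟨e, h⟩ = F2 ⟨e, h⟩) →
        G.cmb e₀ side A σv F1 e = G.cmb e₀ side A σv F2 e := by
      intro A σv F1 F2 e h
      unfold TGraph.cmb
      split_ifs with h1' h2'
      · exact h h1'
      · rfl
      · rfl
    have main : ∀ n : ℕ, ∃ f : {e : G.E // e ≠ e₀ ∧ side (G.fst e) = false} → ℤ × ℤ,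
        (∀ e, (f e).1 + (f e).2 = ω.2 e.1 ∧ 0 ≤ (f e).1 ∧ (f e).1 ≤ d₁ ∧
          0 ≤ (f e).2 ∧ (f e).2 ≤ d₂) ∧
        (∀ v, side v = false → ¬ G.IsLeaf v → dep v < n →
          (2 ∣ G.vsum v (G.cmb e₀ side A₁ σ₁.2 fun e => (f e).1) ∧
            (∀ e, G.mult v e ≠ 0 → 2 * (G.cmb e₀ side A₁ σ₁.2 fun e => (f e).1) e ≤
              G.vsum v (G.cmb e₀ side A₁ σ₁.2 fun e => (f e).1)) ∧
            G.vsum v (G.cmb e₀ side A₁ σ₁.2 fun e => (f e).1) ≤ 2 * d₁) ∧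
          (2 ∣ G.vsum v (G.cmb e₀ side A₂ σ₂.2 fun e => (f e).2) ∧
            (∀ e, G.mult v e ≠ 0 → 2 * (G.cmb e₀ side A₂ σ₂.2 fun e => (f e).2) e ≤
              G.vsum v (G.cmb e₀ side A₂ σ₂.2 fun e => (f e).2)) ∧
            G.vsum v (G.cmb e₀ side A₂ σ₂.2 fun e => (f e).2) ≤ 2 * d₂)) := by
      intro n
      induction n with
      | zero =>
        refine ⟨fun e => (min (ω.2 e.1) d₁, ω.2 e.1 - min (ω.2 e.1) d₁), fun e => ?_,
          fun v _ _ h => absurd h (Nat.not_lt_zero _)⟩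
        have h0 := hωval e.1
        have hb := hEb e.1 e.2.1 e.2.2
        refine ⟨?_, ?_, ?_, ?_, ?_⟩ <;> · dsimp only; omega
      | succ n ih =>
        obtain ⟨f, hf1, hf2⟩ := ih
        have vertexLemma : ∀ v, side v = false → ¬ G.IsLeaf v → dep v = n →
            ∃ g : {e : G.E // e ≠ e₀ ∧ side (G.fst e) = false} → ℤ × ℤ,
              (∀ e, upf e.1 ≠ v → g e = f e) ∧
              (∀ e, (g e).1 + (g e).2 = ω.2 e.1 ∧ 0 ≤ (g e).1 ∧ (g e).1 ≤ d₁ ∧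
                0 ≤ (g e).2 ∧ (g e).2 ≤ d₂) ∧
              ((2 ∣ G.vsum v (G.cmb e₀ side A₁ σ₁.2 fun e => (g e).1) ∧
                (∀ e, G.mult v e ≠ 0 → 2 * (G.cmb e₀ side A₁ σ₁.2 fun e => (g e).1) e ≤
                  G.vsum v (G.cmb e₀ side A₁ σ₁.2 fun e => (g e).1)) ∧
                G.vsum v (G.cmb e₀ side A₁ σ₁.2 fun e => (g e).1) ≤ 2 * d₁) ∧
               (2 ∣ G.vsum v (G.cmb e₀ side A₂ σ₂.2 fun e => (g e).2) ∧
                (∀ e, G.mult v e ≠ 0 → 2 * (G.cmb e₀ side A₂ σ₂.2 fun e => (g e).2) e ≤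
                  G.vsum v (G.cmb e₀ side A₂ σ₂.2 fun e => (g e).2)) ∧
                G.vsum v (G.cmb e₀ side A₂ σ₂.2 fun e => (g e).2) ≤ 2 * d₂)) := by
          intro v hv hl hdv
          obtain ⟨p, aa, hpinc, hpA1, hpA2, haasum, haa10, haa1d, haa20, haa2d, hpdisj,
              hpW, hpPar⟩ :
              ∃ (p : G.E) (aa : ℤ × ℤ), (G.fst p = v ∨ G.snd p = v) ∧
                G.cmb e₀ side A₁ σ₁.2 (fun e => (f e).1) p = aa.1 ∧
                G.cmb e₀ side A₂ σ₂.2 (fun e => (f e).2) p = aa.2 ∧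
                aa.1 + aa.2 = ω.2 p ∧ 0 ≤ aa.1 ∧ aa.1 ≤ d₁ ∧ 0 ≤ aa.2 ∧ aa.2 ≤ d₂ ∧
                (p = e₀ ∨ ((p ≠ e₀ ∧ side (G.fst p) = false) ∧ upf p ≠ v)) ∧
                (v = G.snd e₀ → p = e₀) ∧ (v ≠ G.snd e₀ → p = parE v) := by
            by_cases hvW : v = G.snd e₀
            · exact ⟨e₀, (A₁, A₂), Or.inr hvW.symm,
                G.cmb_e₀ e₀ side A₁ σ₁.2 (fun e => (f e).1),
                G.cmb_e₀ e₀ side A₂ σ₂.2 (fun e => (f e).2), hAsum,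
                hA₁0, hA₁d, hA₂0, hA₂d, Or.inl rfl, fun _ => rfl, fun hc => absurd hvW hc⟩
            · have hpe := hparE v hv hvW
              have hmem : parE v ≠ e₀ ∧ side (G.fst (parE v)) = false := ⟨hpe.1, hpe.2.1⟩
              have hupne : upf (parE v) ≠ v := by
                intro hcontra
                have hov := hownr_par v hv hvW
                have hupo := hup_ne (parE v) hmem.1 hmem.2
                rw [hov] at hupo
                exact hupo hcontra
              exact ⟨parE v, ((f ⟨parE v, hmem⟩).1, (f ⟨parE v, hmem⟩).2),
                hpar_inc v hv hvW,
                G.cmb_mem e₀ side A₁ σ₁.2 (fun e => (f e).1) (parE v) hmem,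
                G.cmb_mem e₀ side A₂ σ₂.2 (fun e => (f e).2) (parE v) hmem,
                (hf1 _).1, (hf1 _).2.1, (hf1 _).2.2.1,
                (hf1 _).2.2.2.1, (hf1 _).2.2.2.2, Or.inr ⟨hmem, hupne⟩,
                fun hc => absurd hc hvW, fun _ => rfl⟩
          obtain ⟨b, c, hbc, hpb, hpc, hmp, hmb, hmc, hm0, hbincV, hcincV⟩ :=
            hstruct v hv hl p hpinc
          have hbne : b ≠ e₀ := by
            intro hbe
            rcases hbincV with hh | hh
            · rw [hbe] at hh
              rw [hh] at h1
              exact Bool.noConfusion (h1.symm.trans hv)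
            · rw [hbe] at hh
              exact hpb ((hpW hh.symm).trans hbe.symm)
          have hcne : c ≠ e₀ := by
            intro hce
            rcases hcincV with hh | hh
            · rw [hce] at hh
              rw [hh] at h1
              exact Bool.noConfusion (h1.symm.trans hv)
            · rw [hce] at hh
              exact hpc ((hpW hh.symm).trans hce.symm)
          have hbside : side (G.fst b) = false := by
            rcases hbincV with hh | hh
            · rw [hh]; exact hv
            · rw [hsep b hbne, hh]; exact hv
          have hcside : side (G.fst c) = false := by
            rcases hcincV with hh | hh
            · rw [hh]; exact hv
            · rw [hsep c hcne, hh]; exact hv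
          have hbmem : b ≠ e₀ ∧ side (G.fst b) = false := ⟨hbne, hbside⟩
          have hcmem : c ≠ e₀ ∧ side (G.fst c) = false := ⟨hcne, hcside⟩
          have hub : upf b = v := by
            refine hchild b hbne hbside v hbincV ?_
            intro heq
            have ho := hownr b hbmem
            by_cases hvW : v = G.snd e₀
            · exact ho.1.2 (heq.symm.trans hvW)
            · have ho2 := ho.2
              rw [← heq] at ho2
              exact hpb ((hpPar hvW).trans ho2)
          have huc : upf c = v := by
            refine hchild c hcne hcside v hcincV ?_
            intro heq
            have ho := hownr c hcmem
            by_cases hvW : v = G.snd e₀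
            · exact ho.1.2 (heq.symm.trans hvW)
            · have ho2 := ho.2
              rw [← heq] at ho2
              exact hpc ((hpPar hvW).trans ho2)
          have hcond := hωvert v hl
          have hv3 := hvsum3 v p b c hpb hpc hbc hmp hmb hmc hm0
          have hEv : 2 ∣ (ω.2 p + ω.2 b + ω.2 c) := by
            rw [← hv3 ω.2]
            exact (heven _).mp hcond.1
          have htp := hcond.2.1 p ((hmult_inc v p).mpr hpinc)
          have htb := hcond.2.1 b ((hmult_inc v b).mpr hbincV)
          have htc := hcond.2.1 c ((hmult_inc v c).mpr hcincV)
          rw [hv3 ω.2] at htp htb htc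
          have hbdv := hcond.2.2
          rw [hv3 ω.2, hω1] at hbdv
          obtain ⟨b₁, c₁, Hb0, Hbβ, Hc0, Hcγ, Hbd1, Hcd1, Hbd2, Hcd2, Hpar1, Htr1a, Htr1b,
            Htr1c, Hsum1, Hpar2, Htr2a, Htr2b, Htr2c, Hsum2⟩ :=
            TGDecompAux.local_split (ω.2 p) (ω.2 b) (ω.2 c) d₁ d₂ aa.1 aa.2 haa10 haa1d
              haa20 haa2d haasum (hωval b) (hωval c) (by omega) (by omega) (by omega) hEv hbdv
          obtain ⟨g, hgdef⟩ : ∃ g : {e : G.E // e ≠ e₀ ∧ side (G.fst e) = false} → ℤ × ℤ,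
              ∀ e, g e = if e.1 = b then (b₁, ω.2 b - b₁)
                else if e.1 = c then (c₁, ω.2 c - c₁) else f e := ⟨_, fun _ => rfl⟩
          have hgb1 : (G.cmb e₀ side A₁ σ₁.2 fun e => (g e).1) b = b₁ := by
            rw [G.cmb_mem e₀ side A₁ σ₁.2 _ b hbmem, hgdef]
            simp
          have hgb2 : (G.cmb e₀ side A₂ σ₂.2 fun e => (g e).2) b = ω.2 b - b₁ := by
            rw [G.cmb_mem e₀ side A₂ σ₂.2 _ b hbmem, hgdef]
            simp
          have hgc1 : (G.cmb e₀ side A₁ σ₁.2 fun e => (g e).1) c = c₁ := by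
            rw [G.cmb_mem e₀ side A₁ σ₁.2 _ c hcmem, hgdef]
            simp [Ne.symm hbc]
          have hgc2 : (G.cmb e₀ side A₂ σ₂.2 fun e => (g e).2) c = ω.2 c - c₁ := by
            rw [G.cmb_mem e₀ side A₂ σ₂.2 _ c hcmem, hgdef]
            simp [Ne.symm hbc]
          have hgp1 : (G.cmb e₀ side A₁ σ₁.2 fun e => (g e).1) p = aa.1 := by
            rcases hpdisj with hpe | ⟨hpmem, -⟩
            · rw [hpe] at hpA1 ⊢
              rw [G.cmb_e₀] at hpA1 ⊢
              exact hpA1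
            · rw [G.cmb_mem e₀ side A₁ σ₁.2 _ p hpmem, hgdef]
              rw [G.cmb_mem e₀ side A₁ σ₁.2 (fun e => (f e).1) p hpmem] at hpA1
              simp only [if_neg hpb, if_neg hpc]
              exact hpA1
          have hgp2 : (G.cmb e₀ side A₂ σ₂.2 fun e => (g e).2) p = aa.2 := by
            rcases hpdisj with hpe | ⟨hpmem, -⟩
            · rw [hpe] at hpA2 ⊢
              rw [G.cmb_e₀] at hpA2 ⊢
              exact hpA2
            · rw [G.cmb_mem e₀ side A₂ σ₂.2 _ p hpmem, hgdef]
              rw [G.cmb_mem e₀ side A₂ σ₂.2 (fun e => (f e).2) p hpmem] at hpA2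
              simp only [if_neg hpb, if_neg hpc]
              exact hpA2
          have hvs1 : G.vsum v (G.cmb e₀ side A₁ σ₁.2 fun e => (g e).1) =
              aa.1 + b₁ + c₁ := by
            rw [hv3 (G.cmb e₀ side A₁ σ₁.2 fun e => (g e).1), hgp1, hgb1, hgc1]
          have hvs2 : G.vsum v (G.cmb e₀ side A₂ σ₂.2 fun e => (g e).2) =
              aa.2 + (ω.2 b - b₁) + (ω.2 c - c₁) := by
            rw [hv3 (G.cmb e₀ side A₂ σ₂.2 fun e => (g e).2), hgp2, hgb2, hgc2]
          refine ⟨g, ?_, ?_, ?_⟩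
          · intro e hne
            have h1' : e.1 ≠ b := fun hh => hne (by rw [hh]; exact hub)
            have h2' : e.1 ≠ c := fun hh => hne (by rw [hh]; exact huc)
            rw [hgdef, if_neg h1', if_neg h2']
          · intro e
            rw [hgdef]
            by_cases hh1 : e.1 = b
            · simp only [if_pos hh1]
              rw [hh1]
              exact ⟨by omega, by omega, by omega, by omega, by omega⟩
            · by_cases hh2 : e.1 = c
              · simp only [if_neg hh1, if_pos hh2]
                rw [hh2]
                exact ⟨by omega, by omega, by omega, by omega, by omega⟩
              · simp only [if_neg hh1, if_neg hh2]
                exact hf1 e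
          · refine ⟨⟨by rw [hvs1]; exact Hpar1, fun e hme => ?_, by rw [hvs1]; omega⟩,
              ⟨by rw [hvs2]; exact Hpar2, fun e hme => ?_, by rw [hvs2]; omega⟩⟩
            · have hepc : e = p ∨ e = b ∨ e = c := by
                by_contra hcon
                push_neg at hcon
                exact hme (hm0 e hcon.1 hcon.2.1 hcon.2.2)
              rw [hvs1]
              rcases hepc with hh | hh | hh
              · rw [hh, hgp1]; omega
              · rw [hh, hgb1]; omega
              · rw [hh, hgc1]; omega
            · have hepc : e = p ∨ e = b ∨ e = c := by
                by_contra hcon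
                push_neg at hcon
                exact hme (hm0 e hcon.1 hcon.2.1 hcon.2.2)
              rw [hvs2]
              rcases hepc with hh | hh | hh
              · rw [hh, hgp2]; omega
              · rw [hh, hgb2]; omega
              · rw [hh, hgc2]; omega
        have vertexLemma' : ∀ v : G.V, ∃ g : {e : G.E // e ≠ e₀ ∧ side (G.fst e) = false} → ℤ × ℤ,
            (side v = false → ¬ G.IsLeaf v → dep v = n →
              ((∀ e, upf e.1 ≠ v → g e = f e) ∧
              (∀ e, (g e).1 + (g e).2 = ω.2 e.1 ∧ 0 ≤ (g e).1 ∧ (g e).1 ≤ d₁ ∧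
                0 ≤ (g e).2 ∧ (g e).2 ≤ d₂) ∧
              ((2 ∣ G.vsum v (G.cmb e₀ side A₁ σ₁.2 fun e => (g e).1) ∧
                (∀ e, G.mult v e ≠ 0 → 2 * (G.cmb e₀ side A₁ σ₁.2 fun e => (g e).1) e ≤
                  G.vsum v (G.cmb e₀ side A₁ σ₁.2 fun e => (g e).1)) ∧
                G.vsum v (G.cmb e₀ side A₁ σ₁.2 fun e => (g e).1) ≤ 2 * d₁) ∧
               (2 ∣ G.vsum v (G.cmb e₀ side A₂ σ₂.2 fun e => (g e).2) ∧
                (∀ e, G.mult v e ≠ 0 → 2 * (G.cmb e₀ side A₂ σ₂.2 fun e => (g e).2) e ≤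
                  G.vsum v (G.cmb e₀ side A₂ σ₂.2 fun e => (g e).2)) ∧
                G.vsum v (G.cmb e₀ side A₂ σ₂.2 fun e => (g e).2) ≤ 2 * d₂)))) ∧
            (¬(side v = false ∧ ¬ G.IsLeaf v ∧ dep v = n) → g = f) := by
          intro v
          by_cases hc : side v = false ∧ ¬ G.IsLeaf v ∧ dep v = n
          · obtain ⟨g, hg1, hg2, hg3⟩ := vertexLemma v hc.1 hc.2.1 hc.2.2
            exact ⟨g, fun _ _ _ => ⟨hg1, hg2, hg3⟩, fun hn => absurd hc hn⟩
          · exact ⟨f, fun ha hb hd => absurd ⟨ha, hb, hd⟩ hc, fun _ => rfl⟩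
        choose gv hgv using vertexLemma'
        refine ⟨fun e => gv (upf e.1) e, fun e => ?_, fun v hv hl hlt => ?_⟩
        · dsimp only
          by_cases h : side (upf e.1) = false ∧ ¬ G.IsLeaf (upf e.1) ∧ dep (upf e.1) = n
          · exact ((hgv (upf e.1)).1 h.1 h.2.1 h.2.2).2.1 e
          · rw [(hgv (upf e.1)).2 h]
            exact hf1 e
        · by_cases hdv : dep v = n
          · have hgspec := (hgv v).1 hv hl hdv
            have hagree : ∀ (e : G.E) (he : e ≠ e₀ ∧ side (G.fst e) = false),
                G.mult v e ≠ 0 → gv (upf e) ⟨e, he⟩ = gv v ⟨e, he⟩ := by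
              intro e he hme
              have hinc := (hmult_inc v e).mp hme
              by_cases hupe : upf e = v
              · rw [hupe]
              · have hvo : v = ownr e := by
                  by_contra hne
                  exact hupe (hchild e he.1 he.2 v hinc hne)
                have hd := hup_dep e he.1 he.2
                rw [← hvo] at hd
                have hnd : ¬(side (upf e) = false ∧ ¬ G.IsLeaf (upf e) ∧ dep (upf e) = n) := by
                  intro hc
                  rw [hc.2.2] at hd
                  omega
                rw [(hgv (upf e)).2 hnd]
                exact (hgspec.1 ⟨e, he⟩ hupe).symm
            refine ⟨hcondeq v _ _ d₁ (fun e hme => ?_) hgspec.2.2.1,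
              hcondeq v _ _ d₂ (fun e hme => ?_) hgspec.2.2.2⟩
            · exact hcmb_eq A₁ σ₁.2 _ _ e (fun h => by dsimp only; rw [hagree e h hme])
            · exact hcmb_eq A₂ σ₂.2 _ _ e (fun h => by dsimp only; rw [hagree e h hme])
          · have hlt' : dep v < n := by omega
            have hagree : ∀ (e : G.E) (he : e ≠ e₀ ∧ side (G.fst e) = false),
                G.mult v e ≠ 0 → gv (upf e) ⟨e, he⟩ = f ⟨e, he⟩ := by
              intro e he hme
              have hinc := (hmult_inc v e).mp hme
              have hnd : ¬(side (upf e) = false ∧ ¬ G.IsLeaf (upf e) ∧ dep (upf e) = n) := by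
                intro hc
                by_cases hupe : upf e = v
                · rw [hupe] at hc
                  exact hdv hc.2.2
                · have hvo : v = ownr e := by
                    by_contra hne
                    exact hupe (hchild e he.1 he.2 v hinc hne)
                  have hd := hup_dep e he.1 he.2
                  rw [← hvo] at hd
                  rw [hc.2.2] at hd
                  omega
              rw [(hgv (upf e)).2 hnd]
            have hold := hf2 v hv hl hlt'
            refine ⟨hcondeq v _ _ d₁ (fun e hme => ?_) hold.1,
              hcondeq v _ _ d₂ (fun e hme => ?_) hold.2⟩
            · exact hcmb_eq A₁ σ₁.2 _ _ e (fun h => by dsimp only; rw [hagree e h hme])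
            · exact hcmb_eq A₂ σ₂.2 _ _ e (fun h => by dsimp only; rw [hagree e h hme])
    obtain ⟨f, hf1, hf2⟩ := main (Finset.univ.sup dep + 1)
    have hdepbd : ∀ v : G.V, dep v < Finset.univ.sup dep + 1 :=
      fun v => Nat.lt_succ_of_le (Finset.le_sup (Finset.mem_univ v))
    have hval1 : ∀ e, 0 ≤ (G.cmb e₀ side A₁ σ₁.2 fun e => (f e).1) e := by
      intro e
      unfold TGraph.cmb
      split_ifs with hh1 hh2
      · exact (hf1 ⟨e, hh1⟩).2.1
      · exact hA₁0
      · exact hσ₁val e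
    have hval2 : ∀ e, 0 ≤ (G.cmb e₀ side A₂ σ₂.2 fun e => (f e).2) e := by
      intro e
      unfold TGraph.cmb
      split_ifs with hh1 hh2
      · exact (hf1 ⟨e, hh1⟩).2.2.2.1
      · exact hA₂0
      · exact hσ₂val e
    have hvert : ∀ v, ¬ G.IsLeaf v →
        ((Even (G.vsum v (G.cmb e₀ side A₁ σ₁.2 fun e => (f e).1)) ∧
          (∀ e, G.mult v e ≠ 0 → 2 * (G.cmb e₀ side A₁ σ₁.2 fun e => (f e).1) e ≤
            G.vsum v (G.cmb e₀ side A₁ σ₁.2 fun e => (f e).1)) ∧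
          G.vsum v (G.cmb e₀ side A₁ σ₁.2 fun e => (f e).1) ≤ 2 * d₁) ∧
         (Even (G.vsum v (G.cmb e₀ side A₂ σ₂.2 fun e => (f e).2)) ∧
          (∀ e, G.mult v e ≠ 0 → 2 * (G.cmb e₀ side A₂ σ₂.2 fun e => (f e).2) e ≤
            G.vsum v (G.cmb e₀ side A₂ σ₂.2 fun e => (f e).2)) ∧
          G.vsum v (G.cmb e₀ side A₂ σ₂.2 fun e => (f e).2) ≤ 2 * d₂)) := by
      intro v hl
      by_cases hv : side v = false
      · have h := hf2 v hv hl (hdepbd v)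
        exact ⟨⟨(heven _).mpr h.1.1, h.1.2.1, h.1.2.2⟩,
          ⟨(heven _).mpr h.2.1, h.2.2.1, h.2.2.2⟩⟩
      · have hvt : side v = true := by revert hv; cases side v <;> simp
        have heq1 : ∀ e, G.mult v e ≠ 0 →
            (G.cmb e₀ side A₁ σ₁.2 fun e => (f e).1) e = σ₁.2 e := by
          intro e hme
          have hinc := (hmult_inc v e).mp hme
          unfold TGraph.cmb
          split_ifs with hh1 hh2
          · exfalso
            rcases hinc with h | h
            · have hf2' := hh1.2
              rw [h, hvt] at hf2'
              exact Bool.noConfusion hf2'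
            · have hs2 := hh1.2
              rw [hsep e hh1.1, h, hvt] at hs2
              exact Bool.noConfusion hs2
          · rw [hh2] at hinc ⊢
            rcases hinc with h | h
            · rw [← h] at hl
              exact hAσ₁ hl
            · rw [← h] at hvt
              exact Bool.noConfusion (h2.symm.trans hvt)
          · rfl
        have heq2 : ∀ e, G.mult v e ≠ 0 →
            (G.cmb e₀ side A₂ σ₂.2 fun e => (f e).2) e = σ₂.2 e := by
          intro e hme
          have hinc := (hmult_inc v e).mp hme
          unfold TGraph.cmb
          split_ifs with hh1 hh2
          · exfalso
            rcases hinc with h | h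
            · have hf2' := hh1.2
              rw [h, hvt] at hf2'
              exact Bool.noConfusion hf2'
            · have hs2 := hh1.2
              rw [hsep e hh1.1, h, hvt] at hs2
              exact Bool.noConfusion hs2
          · rw [hh2] at hinc ⊢
            rcases hinc with h | h
            · rw [← h] at hl
              exact hAσ₂ hl
            · rw [← h] at hvt
              exact Bool.noConfusion (h2.symm.trans hvt)
          · rfl
        have hvq1 : G.vsum v (G.cmb e₀ side A₁ σ₁.2 fun e => (f e).1) = G.vsum v σ₁.2 :=
          hveq v _ _ heq1
        have hvq2 : G.vsum v (G.cmb e₀ side A₂ σ₂.2 fun e => (f e).2) = G.vsum v σ₂.2 :=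
          hveq v _ _ heq2
        obtain ⟨hEv1, hper1, hbd1⟩ := hσ₁vert v hvt hl
        obtain ⟨hEv2, hper2, hbd2⟩ := hσ₂vert v hvt hl
        rw [hσ₁deg] at hbd1
        rw [hσ₂deg] at hbd2
        refine ⟨⟨by rw [hvq1]; exact hEv1, fun e hme => ?_, by rw [hvq1]; exact hbd1⟩,
          ⟨by rw [hvq2]; exact hEv2, fun e hme => ?_, by rw [hvq2]; exact hbd2⟩⟩
        · rw [hvq1, heq1 e hme]
          exact hper1 e hme
        · rw [hvq2, heq2 e hme]
          exact hper2 e hme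
    refine ⟨(d₁, G.cmb e₀ side A₁ σ₁.2 fun e => (f e).1),
      (d₂, G.cmb e₀ side A₂ σ₂.2 fun e => (f e).2),
      ⟨hd₁.le, hval1, fun v hl => (hvert v hl).1⟩,
      ⟨hd₂.le, hval2, fun v hl => (hvert v hl).2⟩, ?_, rfl, rfl⟩
    refine Prod.ext_iff.mpr ⟨?_, ?_⟩
    · rw [Prod.fst_add]
      exact hω1
    · rw [Prod.snd_add]
      funext e
      simp only [Pi.add_apply]
      show ω.2 e = (G.cmb e₀ side A₁ σ₁.2 fun e => (f e).1) e +
        (G.cmb e₀ side A₂ σ₂.2 fun e => (f e).2) e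
      unfold TGraph.cmb
      split_ifs with hh1 hh2
      · exact ((hf1 ⟨e, hh1⟩).1).symm
      · rw [hh2]
        exact hAsum.symm
      · have hnf : ¬ (side (G.fst e) = false) := fun hsf => hh1 ⟨hh2, hsf⟩
        have hht : side (G.fst e) = true := by revert hnf; cases side (G.fst e) <;> simp
        exact (hvals e (Or.inl hht)).symm
end

section
/- Let e₁, ..., e_k (k > 1) be edges forming a cycle in a trivalent graph G. Then for any i, one of the two mutations along e_i produces a graph in which the edges {e₁, ..., e_k} \ {e_i} form a cycle of length k − 1. -/
namespace TGraph

/-- The endpoint of `e` selected by `s`. -/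
def endAt (G : TGraph) (e : G.E) (s : Bool) : G.V := if s then G.snd e else G.fst e

/-- Reattachment used in a mutation: the `sa`-endpoint of `a` and the
`sb`-endpoint of `b` are exchanged. -/
def mutate (G : TGraph) (a b : G.E) (sa sb : Bool) : TGraph where
  V := G.V
  E := G.E
  fst := fun e =>
    if e = a then (if sa then G.fst a else G.endAt b sb)
    else if e = b then (if sb then G.fst b else G.endAt a sa)
    else G.fst e
  snd := fun e =>
    if e = a then (if sa then G.endAt b sb else G.snd a)
    else if e = b then (if sb then G.endAt a sa else G.snd b)
    else G.snd e

/-- `G'` is obtained from `G` by a mutation along the internal non-loop edge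
`e`: an edge `a` attached at `∂₁ e` and an edge `b` attached at `∂₂ e` exchange
these endpoints. -/
def MutationAlong (G : TGraph) (e : G.E) (G' : TGraph) : Prop :=
  ∃ (a b : G.E) (sa sb : Bool), a ≠ e ∧ b ≠ e ∧ a ≠ b ∧
    G.endAt a sa = G.fst e ∧ G.endAt b sb = G.snd e ∧
    G.fst e ≠ G.snd e ∧ ¬ G.IsLeaf (G.fst e) ∧ ¬ G.IsLeaf (G.snd e) ∧
    G' = G.mutate a b sa sb

end TGraph

/-- Cyclic successor on `Fin k`. -/
def cnext {k : ℕ} (i : Fin k) : Fin k := ⟨(i.val + 1) % k, Nat.mod_lt _ i.pos⟩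

namespace TGraph

/-- A cycle of length `k`: distinct edges `e i` joining distinct vertices `v i`
and `v (i+1)` cyclically. -/
def IsCycle (G : TGraph) {k : ℕ} (e : Fin k → G.E) (v : Fin k → G.V) : Prop :=
  Function.Injective e ∧ Function.Injective v ∧
  ∀ i, (G.fst (e i) = v i ∧ G.snd (e i) = v (cnext i)) ∨
       (G.fst (e i) = v (cnext i) ∧ G.snd (e i) = v i)

end TGraph

/-!
Let `e i` join `v i` and `v (i+1)`. Besides `e i` and `e (i+1)`, the trivalent vertex `v (i+1)`
carries a third edge `y`, which is not on the cycle. The mutation along `e i` that exchanges the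
`v i`-end of `e (i-1)` with the `v (i+1)`-end of `y` turns `e (i-1)` into an edge from `v (i-1)`
to `v (i+1)` and leaves all other cycle edges in place, so `e (i+1), …, e (i-1)` close up into a
cycle through `v (i+1), …, v (i-1)`.
-/

namespace TGraph

def Joins (G : TGraph) (x : G.E) (p q : G.V) : Prop :=
  (G.fst x = p ∧ G.snd x = q) ∨ (G.fst x = q ∧ G.snd x = p)

section Incidence

variable {G : TGraph} {x : G.E} {p q : G.V}

lemma Joins.symm (h : G.Joins x p q) : G.Joins x q p := Or.symm h

lemma Joins.mult_left (h : G.Joins x p q) (hpq : p ≠ q) : G.mult p x = 1 := by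
  rcases h with ⟨h1, h2⟩ | ⟨h1, h2⟩ <;> simp [mult, h1, h2, hpq.symm]

lemma Joins.mult_right (h : G.Joins x p q) (hpq : p ≠ q) : G.mult q x = 1 :=
  h.symm.mult_left hpq.symm

lemma Joins.eq_or_eq_of_mult_ne_zero (h : G.Joins x p q) {w : G.V} (hw : G.mult w x ≠ 0) :
    w = p ∨ w = q := by
  by_contra! hne
  apply hw
  rcases h with ⟨h1, h2⟩ | ⟨h1, h2⟩ <;> simp [mult, h1, h2, hne.1.symm, hne.2.symm]

lemma Joins.exists_endAt (h : G.Joins x p q) : ∃ s, G.endAt x s = p ∧ G.endAt x (!s) = q := by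
  rcases h with ⟨h1, h2⟩ | ⟨h1, h2⟩
  · exact ⟨false, by simpa [endAt] using h1, by simpa [endAt] using h2⟩
  · exact ⟨true, by simpa [endAt] using h2, by simpa [endAt] using h1⟩

lemma exists_endAt_eq_of_mult_ne_zero (h : G.mult p x ≠ 0) : ∃ s, G.endAt x s = p := by
  by_cases hf : G.fst x = p
  · exact ⟨false, by simpa [endAt] using hf⟩
  · refine ⟨true, ?_⟩
    by_contra hs
    exact h (by simp_all [mult, endAt])

lemma mult_add_mult_le_degree {y : G.E} (hxy : x ≠ y) :
    G.mult p x + G.mult p y ≤ G.degree p := by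
  rw [← Finset.sum_pair hxy]
  exact Finset.sum_le_sum_of_subset (Finset.subset_univ _)

lemma exists_third_edge {y : G.E} (h3 : G.degree p = 3) (hx : G.mult p x = 1)
    (hy : G.mult p y = 1) (hxy : x ≠ y) : ∃ z, G.mult p z ≠ 0 ∧ z ≠ x ∧ z ≠ y := by
  by_contra! hz
  have hsum : G.degree p = ∑ z ∈ {x, y}, G.mult p z := by
    refine (Finset.sum_subset (Finset.subset_univ _) fun z _ hz' => ?_).symm
    simp only [Finset.mem_insert, Finset.mem_singleton, not_or] at hz'
    by_contra h
    exact hz'.2 (hz z h hz'.1)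
  rw [Finset.sum_pair hxy, hx, hy, h3] at hsum
  omega

end Incidence

section Mutation

variable {G : TGraph} {a b : G.E} {sa sb : Bool}

lemma mutate_joins_of_ne {x : G.E} {p q : G.V} (hxa : x ≠ a) (hxb : x ≠ b)
    (h : G.Joins x p q) : (G.mutate a b sa sb).Joins x p q := by
  simpa [Joins, mutate, hxa, hxb] using h

lemma mutate_joins_left :
    (G.mutate a b sa sb).Joins a (G.endAt a (!sa)) (G.endAt b sb) := by
  cases sa <;> simp [Joins, mutate, endAt]

lemma mutate_joins_right (hba : b ≠ a) :
    (G.mutate a b sa sb).Joins b (G.endAt b (!sb)) (G.endAt a sa) := by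
  cases sb <;> simp [Joins, mutate, endAt, hba]

/-- `mutate` is orientation-sensitive: depending on the orientation of `x`, the required mutation
is `mutate a b` or `mutate b a`. -/
lemma exists_mutationAlong_reattach {x : G.E} {p q : G.V} (hx : G.Joins x p q) (hpq : p ≠ q)
    (hp : ¬ G.IsLeaf p) (hq : ¬ G.IsLeaf q) (hax : a ≠ x) (hbx : b ≠ x) (hab : a ≠ b)
    (ha : G.endAt a sa = p) (hb : G.endAt b sb = q) :
    ∃ (a' b' : G.E) (sa' sb' : Bool), G.MutationAlong x (G.mutate a' b' sa' sb') ∧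
      (G.mutate a' b' sa' sb').Joins a (G.endAt a (!sa)) q ∧
      ∀ y p' q', y ≠ a → y ≠ b → G.Joins y p' q' → (G.mutate a' b' sa' sb').Joins y p' q' := by
  rcases hx with ⟨h1, h2⟩ | ⟨h1, h2⟩
  · refine ⟨a, b, sa, sb, ?_, hb ▸ mutate_joins_left, fun y _ _ hya hyb =>
      mutate_joins_of_ne hya hyb⟩
    exact ⟨a, b, sa, sb, hax, hbx, hab, ha.trans h1.symm, hb.trans h2.symm,
      h1 ▸ h2 ▸ hpq, h1 ▸ hp, h2 ▸ hq, rfl⟩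
  · refine ⟨b, a, sb, sa, ?_, hb ▸ mutate_joins_right hab, fun y _ _ hya hyb =>
      mutate_joins_of_ne hyb hya⟩
    exact ⟨b, a, sb, sa, hbx, hax, hab.symm, hb.trans h1.symm, ha.trans h2.symm,
      h1 ▸ h2 ▸ hpq.symm, h1 ▸ hq, h2 ▸ hp, rfl⟩

end Mutation

section Cycle

lemma cnext_eq_add_one {n : ℕ} (x : Fin (n + 1)) : cnext x = x + 1 := by
  ext
  simp [cnext, Fin.val_add]

lemma cnext_last (n : ℕ) : cnext (Fin.last n) = 0 := by
  ext
  simp [cnext]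

lemma succ_cnext_of_ne_last {n : ℕ} {j : Fin (n + 1)} (h : j ≠ Fin.last n) :
    (cnext j).succ = j.succ + 1 := by
  have : j.val < n := Fin.val_lt_last h
  ext
  simp only [cnext, Fin.val_succ, Fin.val_add, Fin.val_one]
  rw [Nat.mod_eq_of_lt (by omega), Nat.mod_eq_of_lt (by omega)]

variable {G : TGraph} {n : ℕ} {e : Fin (n + 2) → G.E} {v : Fin (n + 2) → G.V}

lemma IsCycle.joins (hc : G.IsCycle e v) (x : Fin (n + 2)) : G.Joins (e x) (v x) (v (x + 1)) :=
  cnext_eq_add_one x ▸ hc.2.2 x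

lemma IsCycle.vertex_ne_succ (hc : G.IsCycle e v) (x : Fin (n + 2)) : v x ≠ v (x + 1) :=
  fun h => by simpa using hc.2.1 h

lemma IsCycle.mult_edge (hc : G.IsCycle e v) (x : Fin (n + 2)) : G.mult (v x) (e x) = 1 :=
  (hc.joins x).mult_left (hc.vertex_ne_succ x)

lemma IsCycle.mult_edge_sub_one (hc : G.IsCycle e v) (x : Fin (n + 2)) :
    G.mult (v x) (e (x - 1)) = 1 := by
  simpa using (hc.joins (x - 1)).mult_right (hc.vertex_ne_succ (x - 1))

lemma IsCycle.edge_ne_edge_sub_one (hc : G.IsCycle e v) (x : Fin (n + 2)) : e x ≠ e (x - 1) :=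
  fun h => by simpa using (hc.1 h).symm

lemma IsCycle.degree_eq_three (hc : G.IsCycle e v) (hG : G.Trivalent) (x : Fin (n + 2)) :
    G.degree (v x) = 3 := by
  have h2 := mult_add_mult_le_degree (p := v x) (hc.edge_ne_edge_sub_one x)
  rw [hc.mult_edge, hc.mult_edge_sub_one] at h2
  exact (hG (v x)).resolve_left (by omega)

lemma IsCycle.not_isLeaf (hc : G.IsCycle e v) (hG : G.Trivalent) (x : Fin (n + 2)) :
    ¬ G.IsLeaf (v x) := by
  simp [IsLeaf, hc.degree_eq_three hG x]

lemma IsCycle.exists_edge_off (hc : G.IsCycle e v) (hG : G.Trivalent) (x : Fin (n + 2)) :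
    ∃ y, G.mult (v x) y ≠ 0 ∧ ∀ z, y ≠ e z := by
  obtain ⟨y, hy, hyx, hyx'⟩ := exists_third_edge (hc.degree_eq_three hG x) (hc.mult_edge x)
    (hc.mult_edge_sub_one x) (hc.edge_ne_edge_sub_one x)
  refine ⟨y, hy, fun z hyz => ?_⟩
  rcases (hc.joins z).eq_or_eq_of_mult_ne_zero (hyz ▸ hy) with h | h
  · exact hyx (hyz.trans (congrArg e (hc.2.1 h).symm))
  · exact hyx' (hyz.trans (congrArg e (eq_sub_of_add_eq (hc.2.1 h).symm)))

/-- The reindexing `j ↦ i + j.succ` runs from `i + 1` around to `i - 1`, skipping `i`. -/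
lemma isCycle_skip {H : TGraph} {e : Fin (n + 2) → H.E} {v : Fin (n + 2) → H.V}
    (he : Function.Injective e) (hv : Function.Injective v) (i : Fin (n + 2))
    (hjoin : ∀ x, x ≠ i - 1 → x ≠ i → H.Joins (e x) (v x) (v (x + 1)))
    (hshort : H.Joins (e (i - 1)) (v (i - 1)) (v (i + 1))) :
    H.IsCycle (fun j : Fin (n + 1) => e (i + j.succ)) (fun j => v (i + j.succ)) := by
  have hinj : Function.Injective fun j : Fin (n + 1) => i + j.succ :=
    (add_right_injective i).comp (Fin.succ_injective _)
  have hlast : i + Fin.last (n + 1) = i - 1 := by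
    rw [sub_eq_add_neg]
    congr 1
    ext
    simp
  refine ⟨he.comp hinj, hv.comp hinj, fun j => ?_⟩
  by_cases hj : j = Fin.last n
  · subst hj
    simpa [Joins, cnext_last, hlast] using hshort
  · have hne : i + j.succ ≠ i - 1 := fun h =>
      hj (Fin.succ_injective _ (add_left_cancel (h.trans hlast.symm)))
    simpa [Joins, succ_cnext_of_ne_last hj, add_assoc] using
      hjoin _ hne (by simp [Fin.succ_ne_zero])

end Cycle

end TGraph

/-- If `e 0, ..., e (k-1)` form a cycle of length `k > 1` in a
trivalent graph `G`, then for any `i` one of the mutations along `e i` yields a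
graph in which the remaining edges form a cycle of length `k - 1`. -/
theorem mutation_shortens_cycle (G : TGraph) (hG : G.Trivalent) (k : ℕ) (hk : 1 < k)
    (e : Fin k → G.E) (v : Fin k → G.V) (hcyc : G.IsCycle e v) (i : Fin k) :
    ∃ (a b : G.E) (sa sb : Bool),
      G.MutationAlong (e i) (G.mutate a b sa sb) ∧
      ∃ (e' : Fin (k - 1) → G.E) (v' : Fin (k - 1) → G.V),
        (G.mutate a b sa sb).IsCycle e' v' ∧
        ∀ j, ∃ j' : Fin k, j' ≠ i ∧ e' j = e j' := by
  obtain ⟨n, rfl⟩ : ∃ n, k = n + 2 := ⟨k - 2, by omega⟩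
  obtain ⟨y, hy, hy_off⟩ := hcyc.exists_edge_off hG (i + 1)
  obtain ⟨sy, hsy⟩ := TGraph.exists_endAt_eq_of_mult_ne_zero hy
  obtain ⟨sp, hsp, hsp'⟩ := (hcyc.joins (i - 1)).symm.exists_endAt
  obtain ⟨a, b, sa, sb, hmut, hshort, hkeep⟩ :=
    TGraph.exists_mutationAlong_reattach (hcyc.joins i) (hcyc.vertex_ne_succ i)
      (hcyc.not_isLeaf hG i) (hcyc.not_isLeaf hG (i + 1)) (hcyc.edge_ne_edge_sub_one i).symm
      (hy_off i) (hy_off (i - 1)).symm (by simpa using hsp) hsy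
  have hcyc' := TGraph.isCycle_skip (H := G.mutate a b sa sb) hcyc.1 hcyc.2.1 i
    (fun x hx _ => hkeep _ _ _ (hcyc.1.ne hx) (hy_off x).symm (hcyc.joins x)) (hsp' ▸ hshort)
  exact ⟨a, b, sa, sb, hmut, _, _, hcyc',
    fun (j : Fin (n + 1)) => ⟨i + j.succ, by simp [Fin.succ_ne_zero], rfl⟩⟩
end
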